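/- Let N ≥ 2, K ≥ 1, α > 0, and let q : (Fin K)^N → ℝ be nonnegative weights with Σ_k q(k) = 1. Let |G̃⟩ ∈ ⊗_{i=1}^N ℂ^{2K} and the local isometries Φᵢ : ℂ^{2K} → ℂ^{2K}⊗ℂ² be as follows: |G̃⟩ = Σ_k √(q(k))·(1/√2)(⊗_i e_{2k_i} + ⊗_i e_{2k_i+1}), Φᵢ(e_{2k}) = e_{2k}⊗f₀, Φᵢ(e_{2k+1}) = e_{2k}⊗f₁. Define the block-diagonal experimental observable Ã_{10} on ℂ^{2K} by Ã_{10} = Σ_{k=0}^{K−1} [ ((N−1)α/√(1+(N−1)²α²))·(e_{2k}e_{2k}^* − e_{2k+1}e_{2k+1}^*) + (1/√(1+(N−1)²α²))·(e_{2k}e_{2k+1}^* + e_{2k+1}e_{2k}^*) ]. Then, under the canonical reordering isomorphism ⊗_i(ℂ^{2K}⊗ℂ²) ≅ (⊗_i ℂ^{2K}) ⊗ (⊗_i ℂ²), one has (⊗_{i=1}^N Φᵢ)((Ã_{10}⊗Id⊗⋯⊗Id)|G̃⟩) = |junk⟩ ⊗ ((A*_{10}⊗I₂⊗⋯⊗I₂)|GHZ_N⟩),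 where |junk⟩ = Σ_k √(q(k)) ⊗_i e_{2k_i}, |GHZ_N⟩ = (1/√2)(f₀^{⊗N}+f₁^{⊗N}), and A*_{10} = ((N−1)α·σz + σx)/√(1+(N−1)²α²) acting on ℂ² with basis f₀, f₁. -/

import Mathlib

open Matrix BigOperators Finset

noncomputable section

/-- Tensor product of `N` square matrices on `ℂ^{2K}`, indexed by `Fin N → Fin (2K)`. -/
def tensorBig (N K : ℕ) (M : Fin N → Matrix (Fin (2 * K)) (Fin (2 * K)) ℂ) :
    Matrix (Fin N → Fin (2 * K)) (Fin N → Fin (2 * K)) ℂ :=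
  Matrix.of fun f g => ∏ i, M i (f i) (g i)

/-- Tensor product of `N` 2×2 complex matrices, indexed by bit strings `Fin N → Fin 2`. -/
def tensorN (N : ℕ) (M : Fin N → Matrix (Fin 2) (Fin 2) ℂ) :
    Matrix (Fin N → Fin 2) (Fin N → Fin 2) ℂ :=
  Matrix.of fun f g => ∏ i, M i (f i) (g i)

def sigmax : Matrix (Fin 2) (Fin 2) ℂ := !![0, 1; 1, 0]
def sigmaz : Matrix (Fin 2) (Fin 2) ℂ := !![1, 0; 0, -1]

/-- The even basis index `2k : Fin (2K)`. -/
def ev {K : ℕ} (k : Fin K) : Fin (2 * K) := ⟨2 * (k : ℕ), by have := k.isLt; omega⟩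

/-- The odd basis index `2k+1 : Fin (2K)`. -/
def od {K : ℕ} (k : Fin K) : Fin (2 * K) := ⟨2 * (k : ℕ) + 1, by have := k.isLt; omega⟩

/-- The matrix entries of the SWAP-type local isometry
`Φᵢ : ℂ^{2K} → ℂ^{2K}⊗ℂ²`, `Φᵢ(e_{2k}) = e_{2k}⊗f₀`, `Φᵢ(e_{2k+1}) = e_{2k}⊗f₁`. -/
def isoEntry (K : ℕ) : Fin (2 * K) × Fin 2 → Fin (2 * K) → ℂ := fun p m =>
  if (p.1 : ℕ) = 2 * ((m : ℕ) / 2) ∧ (p.2 : ℕ) = (m : ℕ) % 2 then 1 else 0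

/-- The experimental state `|G̃⟩ = Σ_k √(q k) (1/√2)(⊗ᵢ e_{2kᵢ} + ⊗ᵢ e_{2kᵢ+1})`. -/
def Gtilde (N K : ℕ) (q : (Fin N → Fin K) → ℝ) : (Fin N → Fin (2 * K)) → ℂ := fun f =>
  ∑ k : Fin N → Fin K, ((Real.sqrt (q k) : ℝ) : ℂ) * ((Real.sqrt 2 : ℝ) : ℂ)⁻¹ *
    ((∏ i, if (f i : ℕ) = 2 * (k i : ℕ) then (1 : ℂ) else 0)
      + ∏ i, if (f i : ℕ) = 2 * (k i : ℕ) + 1 then (1 : ℂ) else 0)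

/-- The junk state `|junk⟩ = Σ_k √(q k) ⊗ᵢ e_{2kᵢ}`. -/
def junk (N K : ℕ) (q : (Fin N → Fin K) → ℝ) : (Fin N → Fin (2 * K)) → ℂ := fun g =>
  ∑ k : Fin N → Fin K, ((Real.sqrt (q k) : ℝ) : ℂ) *
    ∏ i, if (g i : ℕ) = 2 * (k i : ℕ) then (1 : ℂ) else 0

/-- The `N`-qubit GHZ state. -/
def ghz (N : ℕ) : (Fin N → Fin 2) → ℂ := fun f =>
  if f = (fun _ => 0) then ((Real.sqrt 2 : ℝ) : ℂ)⁻¹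
  else if f = (fun _ => 1) then ((Real.sqrt 2 : ℝ) : ℂ)⁻¹ else 0

/-- The block-diagonal experimental observable `Ã₁₀ = ⊕_k A₁₀^{(k)}` on `ℂ^{2K}`. -/
def Atilde10 (N K : ℕ) (α : ℝ) : Matrix (Fin (2 * K)) (Fin (2 * K)) ℂ :=
  ∑ k : Fin K,
    ((((((N : ℝ) - 1) * α / Real.sqrt (1 + ((N : ℝ) - 1) ^ 2 * α ^ 2)) : ℝ) : ℂ) •
        (single (ev k) (ev k) (1 : ℂ) - single (od k) (od k) (1 : ℂ))
      + (((1 / Real.sqrt (1 + ((N : ℝ) - 1) ^ 2 * α ^ 2)) : ℝ) : ℂ) •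
        (single (ev k) (od k) (1 : ℂ) + single (od k) (ev k) (1 : ℂ)))

/-- The reference observable `A*₁₀ = ((N−1)α σz + σx)/√(1+(N−1)²α²)` on ℂ². -/
def Astar10 (N : ℕ) (α : ℝ) : Matrix (Fin 2) (Fin 2) ℂ :=
  ((Real.sqrt (1 + ((N : ℝ) - 1) ^ 2 * α ^ 2) : ℝ) : ℂ)⁻¹ •
    (((((N : ℝ) - 1) * α : ℝ) : ℂ) • sigmaz + sigmax)

/-!
Everything factorizes over the parties. Let `ιₖ : ℂ² → ℂ^{2K}` be the inclusion `f_j ↦ e_{2k+j}`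
of the `k`-th two-dimensional block. Then `|G̃⟩ = Σ_k √(q k) (⊗ᵢ ι_{kᵢ}) |GHZ_N⟩`, and `Ã₁₀` is
block diagonal with every block equal to `A*₁₀`, i.e. `Ã₁₀ ιₖ = ιₖ A*₁₀`. The SWAP isometry sends
the block `k` to `e_{2k} ⊗ ℂ²`: `Φ ιₖ = e_{2k} ⊗ I₂`. Hence
`(⊗ᵢ Φ)(Ã₁₀ ⊗ I ⊗ ⋯ ⊗ I)(⊗ᵢ ι_{kᵢ}) = (⊗ᵢ e_{2kᵢ}) ⊗ (A*₁₀ ⊗ I₂ ⊗ ⋯ ⊗ I₂)`, and summing over `k`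
with weights `√(q k)` turns `⊗ᵢ e_{2kᵢ}` into `|junk⟩`.
-/

section PiKron

variable {ι R : Type*} [Fintype ι] [CommSemiring R]

def piKron {α β : Type*} (M : ι → Matrix α β R) : Matrix (ι → α) (ι → β) R :=
  Matrix.of fun f g => ∏ i, M i (f i) (g i)

variable [DecidableEq ι]

theorem piKron_mul {α β γ : Type*} [Fintype β] (M : ι → Matrix α β R) (M' : ι → Matrix β γ R) :
    piKron M * piKron M' = piKron fun i => M i * M' i := by
  ext f h
  simp only [piKron, mul_apply, of_apply, Finset.prod_univ_sum, Fintype.piFinset_univ,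
    Finset.prod_mul_distrib]

theorem piKron_mulVec_single_one {α β : Type*} [Fintype β] [DecidableEq β]
    (M : ι → Matrix α β R) (c : ι → β) (f : ι → α) :
    (piKron M *ᵥ Pi.single c 1) f = ∏ i, M i (f i) (c i) := by
  simp [piKron]

theorem piKron_mulVec_apply_of_eq_mul {α β γ : Type*} [Fintype γ] (M : ι → Matrix (α × β) γ R)
    (u : ι → α → R) (B : ι → Matrix β γ R) (hM : ∀ i p j, M i p j = u i p.1 * B i p.2 j)
    (v : (ι → γ) → R) (g : ι → α) (b : ι → β) :
    (piKron M *ᵥ v) (fun i => (g i, b i)) = (∏ i, u i (g i)) * (piKron B *ᵥ v) b := by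
  simp only [mulVec, dotProduct, piKron, of_apply, hM, Finset.prod_mul_distrib, Finset.mul_sum,
    mul_assoc]

end PiKron

theorem tensorN_eq_piKron (N : ℕ) (M : Fin N → Matrix (Fin 2) (Fin 2) ℂ) :
    tensorN N M = piKron M := rfl

def blockIndex {K : ℕ} (κ : Fin K) (j : Fin 2) : Fin (2 * K) :=
  ⟨2 * κ + j, by omega⟩

theorem blockIndex_inj {K : ℕ} {k κ : Fin K} {j j' : Fin 2} :
    blockIndex k j = blockIndex κ j' ↔ k = κ ∧ j = j' := by
  simp only [blockIndex, Fin.ext_iff]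
  omega

theorem ev_eq_blockIndex {K : ℕ} (κ : Fin K) : ev κ = blockIndex κ 0 := rfl

theorem od_eq_blockIndex {K : ℕ} (κ : Fin K) : od κ = blockIndex κ 1 := rfl

def blockInclusion (K : ℕ) (κ : Fin K) : Matrix (Fin (2 * K)) (Fin 2) ℂ :=
  Matrix.of fun m j => if m = blockIndex κ j then 1 else 0

theorem ghz_eq_smul_add_single (N : ℕ) (hN : 0 < N) :
    ghz N = ((Real.sqrt 2 : ℝ) : ℂ)⁻¹ • (Pi.single (fun _ => 0) 1 + Pi.single (fun _ => 1) 1) := by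
  have hne : (fun _ : Fin N => (0 : Fin 2)) ≠ fun _ => 1 := fun h =>
    absurd (congrFun h ⟨0, hN⟩) (by decide)
  ext f
  by_cases h0 : f = fun _ => 0
  · subst h0; simp [ghz, hne]
  · by_cases h1 : f = fun _ => 1
    · subst h1; simp [ghz, hne.symm]
    · simp [ghz, h0, h1]

theorem Gtilde_eq_sum_piKron_mulVec_ghz (N K : ℕ) (hN : 0 < N) (q : (Fin N → Fin K) → ℝ) :
    Gtilde N K q = ∑ k, ((Real.sqrt (q k) : ℝ) : ℂ) •
      (piKron (fun i => blockInclusion K (k i)) *ᵥ ghz N) := by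
  ext f
  simp only [Gtilde, ghz_eq_smul_add_single N hN, mulVec_smul, mulVec_add,
    piKron_mulVec_single_one, blockInclusion, blockIndex, Fin.ext_iff, of_apply, Fin.val_zero,
    Fin.val_one, add_zero, Finset.sum_apply, Pi.smul_apply, Pi.add_apply, smul_eq_mul, mul_add,
    mul_assoc]

theorem blockInclusion_eq_sum_single (K : ℕ) (κ : Fin K) :
    blockInclusion K κ = ∑ j, single (blockIndex κ j) j 1 := by
  ext m j
  rw [Matrix.sum_apply, Finset.sum_eq_single j (fun j' _ h => by simp [h]) (by simp)]
  simp [blockInclusion, single_apply, eq_comm]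

theorem blockInclusion_transpose_mul (K : ℕ) (k κ : Fin K) :
    (blockInclusion K k)ᵀ * blockInclusion K κ = if k = κ then 1 else 0 := by
  ext j j'
  split_ifs with h <;> simp [mul_apply, blockInclusion, one_apply, blockIndex_inj, h, eq_comm]

theorem blockInclusion_mul_mul_transpose (K : ℕ) (κ : Fin K) (B : Matrix (Fin 2) (Fin 2) ℂ) :
    blockInclusion K κ * B * (blockInclusion K κ)ᵀ =
      ∑ j, ∑ j', single (blockIndex κ j) (blockIndex κ j') (B j j') := by
  simp only [blockInclusion_eq_sum_single, transpose_sum, transpose_single, Matrix.sum_mul,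
    Matrix.mul_sum, single_mul_mul_single, one_mul, mul_one]
  exact Finset.sum_comm

theorem Astar10_eq_of (N : ℕ) (α : ℝ) :
    Astar10 N α =
      !![((((N : ℝ) - 1) * α / Real.sqrt (1 + ((N : ℝ) - 1) ^ 2 * α ^ 2) : ℝ) : ℂ),
          ((1 / Real.sqrt (1 + ((N : ℝ) - 1) ^ 2 * α ^ 2) : ℝ) : ℂ);
        ((1 / Real.sqrt (1 + ((N : ℝ) - 1) ^ 2 * α ^ 2) : ℝ) : ℂ),
          -((((N : ℝ) - 1) * α / Real.sqrt (1 + ((N : ℝ) - 1) ^ 2 * α ^ 2) : ℝ) : ℂ)] := by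
  ext i j
  fin_cases i <;> fin_cases j <;> simp [Astar10, sigmax, sigmaz] <;> ring

theorem Atilde10_eq_sum_blockInclusion (N K : ℕ) (α : ℝ) :
    Atilde10 N K α = ∑ k, blockInclusion K k * Astar10 N α * (blockInclusion K k)ᵀ := by
  refine Finset.sum_congr rfl fun k _ => ?_
  simp only [blockInclusion_mul_mul_transpose, Astar10_eq_of, Fin.sum_univ_two, of_apply,
    cons_val', cons_val_zero, cons_val_one, empty_val', cons_val_fin_one, ev_eq_blockIndex,
    od_eq_blockIndex, smul_sub, smul_add, smul_single, smul_eq_mul, mul_one, ← single_neg]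
  abel

theorem Atilde10_mul_blockInclusion (N K : ℕ) (α : ℝ) (κ : Fin K) :
    Atilde10 N K α * blockInclusion K κ = blockInclusion K κ * Astar10 N α := by
  rw [Atilde10_eq_sum_blockInclusion, Matrix.sum_mul, Finset.sum_eq_single κ]
  · rw [Matrix.mul_assoc, blockInclusion_transpose_mul, if_pos rfl, Matrix.mul_one]
  · intro k _ hk
    rw [Matrix.mul_assoc, blockInclusion_transpose_mul, if_neg hk, Matrix.mul_zero]
  · simp

theorem isoEntry_blockIndex {K : ℕ} (p : Fin (2 * K) × Fin 2) (κ : Fin K) (j : Fin 2) :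
    isoEntry K p (blockIndex κ j) =
      (if (p.1 : ℕ) = 2 * κ then 1 else 0) * (1 : Matrix (Fin 2) (Fin 2) ℂ) p.2 j := by
  have hdiv : (2 * (κ : ℕ) + j) / 2 = κ := by omega
  have hmod : (2 * (κ : ℕ) + j) % 2 = j := by omega
  simp only [isoEntry, blockIndex, hdiv, hmod, one_apply, Fin.ext_iff, ite_and, ite_mul, one_mul,
    zero_mul]

theorem isoEntry_mul_blockInclusion_mul_apply {K : ℕ} (κ : Fin K) (B : Matrix (Fin 2) (Fin 2) ℂ)
    (p : Fin (2 * K) × Fin 2) (j : Fin 2) :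
    (Matrix.of (isoEntry K) * blockInclusion K κ * B) p j =
      (if (p.1 : ℕ) = 2 * κ then 1 else 0) * B p.2 j := by
  simp [mul_apply, blockInclusion, isoEntry_blockIndex, one_apply]

/-- Self-testing of the observable `A₁₀` (Appendix B): the local isometries map
`(Ã₁₀⊗Id⊗⋯⊗Id)|G̃⟩` to `|junk⟩ ⊗ ((A*₁₀⊗I₂⊗⋯⊗I₂)|GHZ_N⟩)`. -/
theorem self_test_A10 (N K : ℕ) (hN : 2 ≤ N) (α : ℝ)
    (q : (Fin N → Fin K) → ℝ) :
    ∀ (g : Fin N → Fin (2 * K)) (b : Fin N → Fin 2),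
      (∑ f : Fin N → Fin (2 * K),
          (∏ i, isoEntry K (g i, b i) (f i)) *
            ((tensorBig N K (fun i => if i = (⟨0, by omega⟩ : Fin N)
                then Atilde10 N K α else 1)).mulVec (Gtilde N K q)) f)
        = junk N K q g *
            ((tensorN N (fun i => if i = (⟨0, by omega⟩ : Fin N)
                then Astar10 N α else 1)).mulVec (ghz N)) b := by
  intro g b
  set M : Fin N → Matrix (Fin (2 * K)) (Fin (2 * K)) ℂ :=
    fun i => if i = ⟨0, by omega⟩ then Atilde10 N K α else 1
  set Mstar : Fin N → Matrix (Fin 2) (Fin 2) ℂ :=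
    fun i => if i = ⟨0, by omega⟩ then Astar10 N α else 1
  have hM : ∀ κ i, M i * blockInclusion K κ = blockInclusion K κ * Mstar i := fun κ i => by
    by_cases hi : i = ⟨0, by omega⟩
    · simp [M, Mstar, hi, Atilde10_mul_blockInclusion]
    · simp [M, Mstar, hi]
  calc _ = (piKron (fun _ => Matrix.of (isoEntry K)) *ᵥ (piKron M *ᵥ Gtilde N K q))
          (fun i => (g i, b i)) := rfl
    _ = ∑ k, ((Real.sqrt (q k) : ℝ) : ℂ) * (piKron (fun i =>
          Matrix.of (isoEntry K) * blockInclusion K (k i) * Mstar i) *ᵥ ghz N)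
            (fun i => (g i, b i)) := by
      simp only [Gtilde_eq_sum_piKron_mulVec_ghz N K (by omega), mulVec_sum, mulVec_smul,
        mulVec_mulVec, piKron_mul, Matrix.mul_assoc, hM, Finset.sum_apply, Pi.smul_apply,
        smul_eq_mul]
    _ = ∑ k, ((Real.sqrt (q k) : ℝ) : ℂ) *
          ((∏ i, if (g i : ℕ) = 2 * (k i : ℕ) then 1 else 0) * (piKron Mstar *ᵥ ghz N) b) :=
      Finset.sum_congr rfl fun k _ => congrArg _ <| piKron_mulVec_apply_of_eq_mul _
        (fun i (x : Fin (2 * K)) => if (x : ℕ) = 2 * (k i : ℕ) then 1 else 0) Mstar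
        (fun i => isoEntry_mul_blockInclusion_mul_apply (k i) (Mstar i)) _ g b
    _ = _ := by
      simp only [junk, tensorN_eq_piKron, Finset.sum_mul, mul_assoc]
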